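/- arXiv:2604.28112 — 4 statements merged into one kernel-verified Lean document; each statement's English description precedes it below -/
import Mathlib

section
/- Let F = (A,R,S) be a BSAF, (T,h) ∈ R an attack, and F' = (A,R',S) where R' = (R \ {(T,h)}) ∪ {(cl(T),h)}. Then a closed set E ⊆ A is conflict-free in F if and only if E is conflict-free in F'. -/
variable {α : Type*}

/-- A bipolar set-argumentation framework: arguments `A`, collective attacks `R`,
collective supports `S`. -/
structure BSAF (α : Type*) where
  A : Set α
  R : Set (Set α × α)
  S : Set (Set α × α)

namespace BSAF

/-- Membership in the least superset of `E` that is closed under the supports of `F`. -/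
inductive InCl (F : BSAF α) (E : Set α) : α → Prop
  | base {a : α} : a ∈ E → InCl F E a
  | step {T : Set α} {h : α} : (T, h) ∈ F.S → (∀ t ∈ T, InCl F E t) → InCl F E h

/-- The closure of `E` under the supports of `F`. -/
def cl (F : BSAF α) (E : Set α) : Set α := {a | F.InCl E a}

/-- `E` is closed if its closure equals itself. -/
def Closed (F : BSAF α) (E : Set α) : Prop := F.cl E = E

/-- `E` attacks the set `D`. -/
def Attacks (F : BSAF α) (E D : Set α) : Prop :=
  ∃ T h, (T, h) ∈ F.R ∧ T ⊆ E ∧ h ∈ D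

/-- `E` is conflict-free: it does not attack itself. -/
def ConflictFree (F : BSAF α) (E : Set α) : Prop :=
  ¬ ∃ T h, (T, h) ∈ F.R ∧ T ⊆ E ∧ h ∈ E

/-- `E` defends `a`: every closed attacker of `a` is attacked by `E`. -/
def Defends (F : BSAF α) (E : Set α) (a : α) : Prop :=
  ∀ D : Set α, D ⊆ F.A → F.Closed D → (∃ T, (T, a) ∈ F.R ∧ T ⊆ D) → F.Attacks E D

/-- `E` is admissible: conflict-free, closed, and defends each of its members. -/
def Admissible (F : BSAF α) (E : Set α) : Prop :=
  E ⊆ F.A ∧ F.ConflictFree E ∧ F.Closed E ∧ ∀ a ∈ E, F.Defends E a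

/-- `E` is complete: admissible and contains every argument it defends. -/
def Complete (F : BSAF α) (E : Set α) : Prop :=
  F.Admissible E ∧ ∀ a ∈ F.A, F.Defends E a → a ∈ E

/-- Grounded: ⊆-minimal complete. -/
def Grounded (F : BSAF α) (E : Set α) : Prop :=
  F.Complete E ∧ ∀ E', F.Complete E' → E' ⊆ E → E' = E

/-- Preferred: ⊆-maximal admissible. -/
def Preferred (F : BSAF α) (E : Set α) : Prop :=
  F.Admissible E ∧ ∀ E', F.Admissible E' → E ⊆ E' → E' = E

/-- Stable: admissible and attacks every outside argument. -/
def Stable (F : BSAF α) (E : Set α) : Prop :=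
  F.Admissible E ∧ ∀ x ∈ F.A \ E, ∃ T, (T, x) ∈ F.R ∧ T ⊆ E

end BSAF

/-- Closing a single attack preserves conflict-freeness of closed sets. -/
theorem BSAF.closeAttack_conflictFree (F : BSAF α) (hfin : F.A.Finite)
    (T : Set α) (h : α) (hTh : (T, h) ∈ F.R)
    (E : Set α) (hE : E ⊆ F.A) (hcl : F.Closed E) :
    F.ConflictFree E ↔
      (BSAF.mk F.A ((F.R \ {(T, h)}) ∪ {(F.cl T, h)}) F.S).ConflictFree E := by
  have hmono : ∀ X Y : Set α, X ⊆ Y → F.Closed Y → ∀ a, F.InCl X a → a ∈ Y := by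
    intro X Y hXY hY a ha
    induction ha with
    | base hb => exact hXY hb
    | step hS _ ih => exact hY ▸ InCl.step hS (fun t ht => InCl.base (ih t ht))
  have hclE : ∀ X : Set α, X ⊆ E → F.cl X ⊆ E := fun X hX a ha => hmono X E hX hcl a ha
  have hTcl : T ⊆ F.cl T := fun a ha => InCl.base ha
  constructor
  · rintro hcf ⟨U, x, hU, hUE, hxE⟩
    rcases hU with ⟨hU, -⟩ | hU
    · exact hcf ⟨U, x, hU, hUE, hxE⟩
    · obtain ⟨h1, h2⟩ := Prod.ext_iff.mp (hU : (U, x) = (F.cl T, h))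
      simp only at h1 h2
      exact hcf ⟨T, h, hTh, fun a ha => hUE (h1 ▸ hTcl ha), h2 ▸ hxE⟩
  · rintro hcf ⟨U, x, hU, hUE, hxE⟩
    by_cases hc : (U, x) = (T, h)
    · obtain ⟨h1, h2⟩ := Prod.ext_iff.mp hc
      simp only at h1 h2
      exact hcf ⟨F.cl T, h, Or.inr rfl, hclE _ (h1 ▸ hUE), h2 ▸ hxE⟩
    · exact hcf ⟨U, x, Or.inl ⟨hU, hc⟩, hUE, hxE⟩
end

section
/- Let F = (A,R,S) be a BSAF, (T,h) ∈ R, and F' = (A,R',S) where R' = (R \ {(T,h)}) ∪ {(cl(T),h)}. Then the admissible sets of F and F' coincide: adm(F) = adm(F'). -/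
variable {α : Type*}

namespace BSAF

lemma inCl_mono {F : BSAF α} {E E' : Set α} (hEE : E ⊆ E') {a : α}
    (ha : F.InCl E a) : F.InCl E' a := by
  induction ha with
  | base hx => exact .base (hEE hx)
  | step hs hU ih => exact .step hs ih

lemma subset_cl (F : BSAF α) (E : Set α) : E ⊆ F.cl E := fun _ hx => .base hx

lemma cl_subset_of_closed {F : BSAF α} {E D : Set α} (hD : F.Closed D)
    (hED : E ⊆ D) : F.cl E ⊆ D := by
  intro a ha
  have : F.InCl D a := inCl_mono hED ha
  rw [← hD]; exact this

lemma inCl_congr_S {F F' : BSAF α} (hS : F.S = F'.S) {E : Set α} {a : α} :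
    F.InCl E a → F'.InCl E a := by
  intro ha
  induction ha with
  | base hx => exact .base hx
  | step hs hU ih => exact .step (hS ▸ hs) ih

end BSAF

/-- Closing a single attack preserves the admissible sets. -/
theorem BSAF.closeAttack_admissible (F : BSAF α) (hfin : F.A.Finite)
    (T : Set α) (h : α) (hTh : (T, h) ∈ F.R) :
    ∀ E : Set α, F.Admissible E ↔
      (BSAF.mk F.A ((F.R \ {(T, h)}) ∪ {(F.cl T, h)}) F.S).Admissible E := by
  classical
  set F' : BSAF α := BSAF.mk F.A ((F.R \ {(T, h)}) ∪ {(F.cl T, h)}) F.S with hF'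
  have hS : F.S = F'.S := rfl
  have hclS : ∀ E : Set α, F.cl E = F'.cl E := by
    intro E
    ext a
    exact ⟨BSAF.inCl_congr_S hS, BSAF.inCl_congr_S hS.symm⟩
  have hClosed : ∀ E : Set α, F.Closed E ↔ F'.Closed E := by
    intro E; unfold BSAF.Closed; rw [hclS]
  -- key: for closed E, attacker pairs translate
  have key : ∀ (E : Set α), F.Closed E → ∀ (p : α → Prop),
      (∃ U h', (U, h') ∈ F.R ∧ U ⊆ E ∧ p h') ↔
      (∃ U h', (U, h') ∈ F'.R ∧ U ⊆ E ∧ p h') := by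
    intro E hE p
    constructor
    · rintro ⟨U, h', hmem, hUE, hp⟩
      by_cases hcase : (U, h') = (T, h)
      · obtain ⟨rfl, rfl⟩ := Prod.mk.injEq .. ▸ hcase
        exact ⟨F.cl U, h', Or.inr rfl, BSAF.cl_subset_of_closed hE hUE, hp⟩
        
      · exact ⟨U, h', Or.inl ⟨hmem, hcase⟩, hUE, hp⟩
    · rintro ⟨U, h', hmem, hUE, hp⟩
      rcases hmem with ⟨hmem, -⟩ | hmem
      · exact ⟨U, h', hmem, hUE, hp⟩
      · have hmem' : (U, h') = (F.cl T, h) := hmem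
        have hU : U = F.cl T := congrArg Prod.fst hmem'
        have hh2 : h' = h := congrArg Prod.snd hmem'
        exact ⟨T, h', hh2 ▸ hTh, (F.subset_cl T).trans (hU ▸ hUE), hp⟩
  intro E
  constructor
  · rintro ⟨hEA, hcf, hcl, hdef⟩
    refine ⟨hEA, ?_, (hClosed E).1 hcl, ?_⟩
    · intro ⟨U, h', hm, hU, hh⟩
      exact hcf ((key E hcl (· ∈ E)).2 ⟨U, h', hm, hU, hh⟩)
    · intro a ha D hDA hDcl hatt
      have hDcl' : F.Closed D := (hClosed D).2 hDcl
      have hatt' : ∃ U, (U, a) ∈ F.R ∧ U ⊆ D := by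
        obtain ⟨U, h', hm, hU, rfl⟩ := (key D hDcl' (· = a)).2
          (by obtain ⟨U, hm, hU⟩ := hatt; exact ⟨U, a, hm, hU, rfl⟩)
        exact ⟨U, hm, hU⟩
      have := hdef a ha D hDA hDcl' hatt'
      obtain ⟨U, h', hm, hU, hh⟩ := this
      exact (key E hcl (· ∈ D)).1 ⟨U, h', hm, hU, hh⟩
  · rintro ⟨hEA, hcf, hcl, hdef⟩
    have hclF : F.Closed E := (hClosed E).2 hcl
    refine ⟨hEA, ?_, hclF, ?_⟩
    · intro ⟨U, h', hm, hU, hh⟩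
      exact hcf ((key E hclF (· ∈ E)).1 ⟨U, h', hm, hU, hh⟩)
    · intro a ha D hDA hDcl hatt
      have hDcl' : F'.Closed D := (hClosed D).1 hDcl
      have hatt' : ∃ U, (U, a) ∈ F'.R ∧ U ⊆ D := by
        obtain ⟨U, h', hm, hU, rfl⟩ := (key D hDcl (· = a)).1
          (by obtain ⟨U, hm, hU⟩ := hatt; exact ⟨U, a, hm, hU, rfl⟩)
        exact ⟨U, hm, hU⟩
      have := hdef a ha D hDA hDcl' hatt'
      obtain ⟨U, h', hm, hU, hh⟩ := this
      exact (key E hclF (· ∈ D)).2 ⟨U, h', hm, hU, hh⟩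
end

section
/- Let (F₁,F₂,R₃) be an attack splitting of a BSAF F, E₁ ⊆ A₁, F₂* = mod^{E₁}_{R₃ᶜ}(F₂^{E₁}) the modification of the R-reduct. If E₁ ∈ adm(F₁) and E₂ ∈ adm(F₂*), then E₁ ∪ E₂ is conflict-free in F. Conversely, if E is conflict-free in F, then E ∩ A₁ is conflict-free in F₁ and E ∩ A₂ is conflict-free in F₂^{E₁}. -/
variable {α : Type*}

namespace BSAF

/-- All links of `G` stay within its argument set. -/
def WithinA (G : BSAF α) : Prop :=
  (∀ p ∈ G.R, p.1 ⊆ G.A ∧ p.2 ∈ G.A) ∧ (∀ p ∈ G.S, p.1 ⊆ G.A ∧ p.2 ∈ G.A)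

/-- `(F₁, F₂, R₃)` is an attack splitting of `F`. -/
def IsAttackSplitting (F F₁ F₂ : BSAF α) (R₃ : Set (Set α × α)) : Prop :=
  F₁.WithinA ∧ F₂.WithinA ∧
  F₁.A ∩ F₂.A = ∅ ∧ F.A = F₁.A ∪ F₂.A ∧
  F.S = F₁.S ∪ F₂.S ∧
  F.R = F₁.R ∪ F₂.R ∪ R₃ ∧
  ∀ p ∈ R₃, (p.1 ∩ F₁.A).Nonempty ∧ p.1 ⊆ F.A ∧ p.2 ∈ F₂.A

/-- The closed negative links `R₃ᶜ = {(cl(T), h) | (T, h) ∈ R₃}`. -/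
def closedLinks (F : BSAF α) (R₃ : Set (Set α × α)) : Set (Set α × α) :=
  {p | ∃ T h, (T, h) ∈ R₃ ∧ p = (F.cl T, h)}

/-- The arguments attacked by `E` via the attack relation `Rs`. -/
def attackedBy (Rs : Set (Set α × α)) (E : Set α) : Set α :=
  {a | ∃ T, (T, a) ∈ Rs ∧ T ⊆ E}

/-- The `(E₁, R₃ᶜ)`-reduct of `F₂`. -/
def Rreduct (F F₁ F₂ : BSAF α) (R₃ : Set (Set α × α)) (E₁ : Set α) : BSAF α where
  A := F₂.A
  R := F₂.R ∪ {p | ∃ T h, (T, h) ∈ F.closedLinks R₃ ∧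
        T ∩ attackedBy (F₁.R ∪ F.closedLinks R₃) E₁ = ∅ ∧
        T ∩ F₁.A ⊆ E₁ ∧ p = (T ∩ F₂.A, h)}
  S := F₂.S

/-- The undecided links in `R₃ᶜ` w.r.t. `E₁`. -/
def undecidedLinks (F F₁ : BSAF α) (R₃ : Set (Set α × α)) (E₁ : Set α) : Set (Set α × α) :=
  {p | p ∈ F.closedLinks R₃ ∧
    p.1 ∩ attackedBy (F₁.R ∪ F.closedLinks R₃) E₁ = ∅ ∧ ¬ p.1 ∩ F₁.A ⊆ E₁}

/-- The modification `F₂* = mod^{E₁}_{R₃ᶜ}(F₂^{E₁})`, with fresh self-attacker `s₀`. -/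
def modification (F F₁ F₂ : BSAF α) (R₃ : Set (Set α × α)) (E₁ : Set α) (s₀ : α) : BSAF α where
  A := F₂.A ∪ {s₀}
  R := (F.Rreduct F₁ F₂ R₃ E₁).R ∪ {({s₀}, s₀)} ∪
       {p | ∃ T h, (T, h) ∈ F.undecidedLinks F₁ R₃ E₁ ∧ p = ((T ∩ F₂.A) ∪ {s₀}, h)}
  S := F₂.S

end BSAF

/-! An attack of `F` inside `E₁ ∪ E₂` either lies within one part, where conflict-freeness
rules it out, or is an `R₃`-attack `(T, h)` with `h ∈ E₂`. As `E₁ ∪ E₂` is closed under the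
supports, `cl T ⊆ E₁ ∪ E₂`; and `E₁` attacks no member of `E₁ ∪ E₂`, because an `R₃ᶜ`-attack
on `E₂` with tail inside `E₁` survives in the reduct with empty tail. Hence `(cl T ∩ A₂, h)` is
an attack of the reduct inside `E₂`. Conversely, a new attack `(cl T ∩ A₂, h)` of the reduct
inside `E ∩ A₂` also has `cl T ∩ A₁ ⊆ E`, which puts the `R₃`-attack `(T, h)` inside `E`. -/

namespace BSAF

def IsSupportClosed (S : Set (Set α × α)) (D : Set α) : Prop :=
  ∀ ⦃T : Set α⦄ ⦃h : α⦄, (T, h) ∈ S → T ⊆ D → h ∈ D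

section Closure

variable {F : BSAF α} {E D : Set α}

theorem subset_cl_s8 : E ⊆ F.cl E :=
  fun _ ha => InCl.base ha

theorem cl_subset_of_isSupportClosed (hED : E ⊆ D) (hD : IsSupportClosed F.S D) :
    F.cl E ⊆ D := by
  intro a ha
  induction ha with
  | base ha => exact hED ha
  | step hS _ ih => exact hD hS ih

theorem Closed.isSupportClosed (hD : F.Closed D) : IsSupportClosed F.S D := by
  intro T h hS hT
  rw [← hD]
  exact InCl.step hS fun t ht => InCl.base (hT ht)

end Closure

theorem ConflictFree.anti {F G : BSAF α} {D E : Set α} (hR : G.R ⊆ F.R) (hDE : D ⊆ E)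
    (hE : F.ConflictFree E) : G.ConflictFree D :=
  fun ⟨T, h, hTh, hT, hh⟩ => hE ⟨T, h, hR hTh, hT.trans hDE, hDE hh⟩

theorem closedLink_mem_Rreduct {F F₁ F₂ : BSAF α} {R₃ : Set (Set α × α)} {E₁ T : Set α} {h : α}
    (hTh : (T, h) ∈ R₃) (hatt : Disjoint (F.cl T) (attackedBy (F₁.R ∪ F.closedLinks R₃) E₁))
    (hE₁ : F.cl T ∩ F₁.A ⊆ E₁) : (F.cl T ∩ F₂.A, h) ∈ (F.Rreduct F₁ F₂ R₃ E₁).R :=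
  Or.inr ⟨F.cl T, h, ⟨T, h, hTh, rfl⟩, hatt.inter_eq, hE₁, rfl⟩

theorem subset_of_modification_admissible {F F₁ F₂ : BSAF α} {R₃ : Set (Set α × α)}
    {E₁ E₂ : Set α} {s₀ : α} (hE₂ : (F.modification F₁ F₂ R₃ E₁ s₀).Admissible E₂) :
    E₂ ⊆ F₂.A := by
  obtain ⟨hE₂A, hcf, -⟩ := hE₂
  have hs₀ : s₀ ∉ E₂ := fun hs₀ =>
    hcf ⟨{s₀}, s₀, Or.inl (Or.inr rfl), Set.singleton_subset_iff.2 hs₀, hs₀⟩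
  intro x hx
  exact (hE₂A hx).resolve_right fun hxs => hs₀ (Set.mem_singleton_iff.1 hxs ▸ hx)

theorem Rreduct_R_subset_modification_R {F F₁ F₂ : BSAF α} {R₃ : Set (Set α × α)} {E₁ : Set α}
    {s₀ : α} : (F.Rreduct F₁ F₂ R₃ E₁).R ⊆ (F.modification F₁ F₂ R₃ E₁ s₀).R :=
  fun _ hp => Or.inl (Or.inl hp)

theorem conflictFree_Rreduct_of_modification {F F₁ F₂ : BSAF α} {R₃ : Set (Set α × α)}
    {E₁ E₂ : Set α} {s₀ : α} (hcf : (F.modification F₁ F₂ R₃ E₁ s₀).ConflictFree E₂) :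
    (F.Rreduct F₁ F₂ R₃ E₁).ConflictFree E₂ :=
  hcf.anti Rreduct_R_subset_modification_R le_rfl

namespace IsAttackSplitting

variable {F F₁ F₂ : BSAF α} {R₃ : Set (Set α × α)} (hsplit : F.IsAttackSplitting F₁ F₂ R₃)
include hsplit

theorem disjoint_A : Disjoint F₁.A F₂.A :=
  Set.disjoint_iff_inter_eq_empty.2 hsplit.2.2.1

theorem A_eq : F.A = F₁.A ∪ F₂.A := hsplit.2.2.2.1

theorem S_eq : F.S = F₁.S ∪ F₂.S := hsplit.2.2.2.2.1

theorem R_eq : F.R = F₁.R ∪ F₂.R ∪ R₃ := hsplit.2.2.2.2.2.1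

theorem R₁_subset : F₁.R ⊆ F.R := hsplit.R_eq ▸ fun _ hp => Or.inl (Or.inl hp)

theorem R₂_subset : F₂.R ⊆ F.R := hsplit.R_eq ▸ fun _ hp => Or.inl (Or.inr hp)

theorem R₃_subset : R₃ ⊆ F.R := hsplit.R_eq ▸ fun _ hp => Or.inr hp

theorem subset_A_of_mem_R₃ {T : Set α} {h : α} (hTh : (T, h) ∈ R₃) : T ⊆ F.A :=
  (hsplit.2.2.2.2.2.2 _ hTh).2.1

theorem mem_A₂_of_mem_R₃ {T : Set α} {h : α} (hTh : (T, h) ∈ R₃) : h ∈ F₂.A :=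
  (hsplit.2.2.2.2.2.2 _ hTh).2.2

theorem not_conflictFree_Rreduct {E₁ E₂ T : Set α} {h : α}
    (hE₁ : E₁ ⊆ F₁.A) (hE₂ : E₂ ⊆ F₂.A) (hTh : (T, h) ∈ R₃) (hcl : F.cl T ⊆ E₁ ∪ E₂)
    (hatt : Disjoint (F.cl T) (attackedBy (F₁.R ∪ F.closedLinks R₃) E₁)) (hh : h ∈ E₂) :
    ¬ (F.Rreduct F₁ F₂ R₃ E₁).ConflictFree E₂ := by
  have hdisj := hsplit.disjoint_A
  refine fun hcf => hcf ⟨F.cl T ∩ F₂.A, h, closedLink_mem_Rreduct hTh hatt ?_, ?_, hh⟩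
  · rintro x ⟨hxT, hx₁⟩
    exact (hcl hxT).resolve_right fun hx₂ => hdisj.notMem_of_mem_left hx₁ (hE₂ hx₂)
  · rintro x ⟨hxT, hx₂⟩
    exact (hcl hxT).resolve_left fun hx₁ => hdisj.notMem_of_mem_left (hE₁ hx₁) hx₂

theorem disjoint_attackedBy_self {E₁ : Set α} (hE₁ : E₁ ⊆ F₁.A) (hcf₁ : F₁.ConflictFree E₁) :
    Disjoint (attackedBy (F₁.R ∪ F.closedLinks R₃) E₁) E₁ := by
  rw [Set.disjoint_left]
  rintro b ⟨T, hTb | ⟨T₀, h₀, hT₀, hpair⟩, hT⟩ hb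
  · exact hcf₁ ⟨T, b, hTb, hT, hb⟩
  · obtain ⟨-, rfl⟩ := Prod.mk.inj hpair
    exact hsplit.disjoint_A.notMem_of_mem_left (hE₁ hb) (hsplit.mem_A₂_of_mem_R₃ hT₀)

theorem disjoint_attackedBy_union {E₁ E₂ : Set α} (hE₁ : E₁ ⊆ F₁.A) (hcf₁ : F₁.ConflictFree E₁)
    (hE₂ : E₂ ⊆ F₂.A) (hcf₂ : (F.Rreduct F₁ F₂ R₃ E₁).ConflictFree E₂) :
    Disjoint (attackedBy (F₁.R ∪ F.closedLinks R₃) E₁) (E₁ ∪ E₂) := by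
  have hself := hsplit.disjoint_attackedBy_self hE₁ hcf₁
  refine Set.disjoint_union_right.2 ⟨hself, Set.disjoint_left.2 ?_⟩
  rintro b ⟨T, hTb | ⟨T₀, h₀, hT₀, hpair⟩, hT⟩ hb
  · exact hsplit.disjoint_A.notMem_of_mem_left (hsplit.1.1 _ hTb).2 (hE₂ hb)
  · obtain ⟨rfl, rfl⟩ := Prod.mk.inj hpair
    exact hsplit.not_conflictFree_Rreduct hE₁ hE₂ hT₀ (hT.trans Set.subset_union_left)
      (hself.symm.mono_left hT) hb hcf₂

theorem isSupportClosed_union {E₁ E₂ : Set α} (hE₁ : E₁ ⊆ F₁.A) (hcl₁ : IsSupportClosed F₁.S E₁)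
    (hE₂ : E₂ ⊆ F₂.A) (hcl₂ : IsSupportClosed F₂.S E₂) : IsSupportClosed F.S (E₁ ∪ E₂) := by
  have hdisj := hsplit.disjoint_A
  intro T h hTh hT
  rw [hsplit.S_eq] at hTh
  rcases hTh with hTh | hTh
  · have hT₁ : Disjoint T E₂ := (hdisj.mono_left (hsplit.1.2 _ hTh).1).mono_right hE₂
    exact Or.inl (hcl₁ hTh (hT₁.subset_left_of_subset_union hT))
  · have hT₂ : Disjoint T E₁ := (hdisj.symm.mono_left (hsplit.2.1.2 _ hTh).1).mono_right hE₁
    exact Or.inr (hcl₂ hTh (hT₂.subset_right_of_subset_union hT))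

theorem conflictFree_union {E₁ E₂ : Set α} (hE₁ : E₁ ⊆ F₁.A) (hcf₁ : F₁.ConflictFree E₁)
    (hcl₁ : IsSupportClosed F₁.S E₁) (hE₂ : E₂ ⊆ F₂.A)
    (hcf₂ : (F.Rreduct F₁ F₂ R₃ E₁).ConflictFree E₂) (hcl₂ : IsSupportClosed F₂.S E₂) :
    F.ConflictFree (E₁ ∪ E₂) := by
  have hdisj := hsplit.disjoint_A
  rintro ⟨T, h, hTh, hT, hh⟩
  rw [hsplit.R_eq] at hTh
  rcases hTh with (hTh | hTh) | hTh
  · have hT₁ : Disjoint T E₂ := (hdisj.mono_left (hsplit.1.1 _ hTh).1).mono_right hE₂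
    have hh₁ : h ∈ E₁ :=
      hh.resolve_right fun hh₂ => hdisj.notMem_of_mem_left (hsplit.1.1 _ hTh).2 (hE₂ hh₂)
    exact hcf₁ ⟨T, h, hTh, hT₁.subset_left_of_subset_union hT, hh₁⟩
  · have hT₂ : Disjoint T E₁ := (hdisj.symm.mono_left (hsplit.2.1.1 _ hTh).1).mono_right hE₁
    have hh₂ : h ∈ E₂ :=
      hh.resolve_left fun hh₁ => hdisj.notMem_of_mem_left (hE₁ hh₁) (hsplit.2.1.1 _ hTh).2
    exact hcf₂ ⟨T, h, Or.inl hTh, hT₂.subset_right_of_subset_union hT, hh₂⟩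
  · have hh₂ : h ∈ E₂ := hh.resolve_left fun hh₁ =>
      hdisj.notMem_of_mem_left (hE₁ hh₁) (hsplit.mem_A₂_of_mem_R₃ hTh)
    have hclT : F.cl T ⊆ E₁ ∪ E₂ :=
      cl_subset_of_isSupportClosed hT (hsplit.isSupportClosed_union hE₁ hcl₁ hE₂ hcl₂)
    exact hsplit.not_conflictFree_Rreduct hE₁ hE₂ hTh hclT
      ((hsplit.disjoint_attackedBy_union hE₁ hcf₁ hE₂ hcf₂).symm.mono_left hclT) hh₂ hcf₂

theorem conflictFree_Rreduct_inter {E : Set α} (hcf : F.ConflictFree E) :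
    (F.Rreduct F₁ F₂ R₃ (E ∩ F₁.A)).ConflictFree (E ∩ F₂.A) := by
  rintro ⟨T', h, hTh₂ | ⟨_, _, ⟨T, _, hTh, hcl⟩, -, hT₁, hpair⟩, hT, hh⟩
  · exact hcf.anti hsplit.R₂_subset Set.inter_subset_left ⟨T', h, hTh₂, hT, hh⟩
  obtain ⟨rfl, rfl⟩ := Prod.mk.inj hcl
  obtain ⟨rfl, rfl⟩ := Prod.mk.inj hpair
  refine hcf ⟨T, h, hsplit.R₃_subset hTh, fun t ht => ?_, hh.1⟩
  have htcl : t ∈ F.cl T := subset_cl_s8 ht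
  rcases hsplit.A_eq ▸ hsplit.subset_A_of_mem_R₃ hTh ht with ht₁ | ht₂
  · exact (hT₁ ⟨htcl, ht₁⟩).1
  · exact (hT ⟨htcl, ht₂⟩).1

end IsAttackSplitting

end BSAF

theorem BSAF.attackSplitting_conflictFree_general (F F₁ F₂ : BSAF α) (R₃ : Set (Set α × α))
    (hsplit : F.IsAttackSplitting F₁ F₂ R₃)
    (s₀ : α) :
    (∀ E₁ E₂ : Set α, F₁.Admissible E₁ →
      (F.modification F₁ F₂ R₃ E₁ s₀).Admissible E₂ →
      F.ConflictFree (E₁ ∪ E₂)) ∧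
    (∀ E : Set α, E ⊆ F.A → F.ConflictFree E →
      F₁.ConflictFree (E ∩ F₁.A) ∧
      (F.Rreduct F₁ F₂ R₃ (E ∩ F₁.A)).ConflictFree (E ∩ F₂.A)) := by
  refine ⟨fun E₁ E₂ h₁ h₂ => ?_, fun E _ hcf => ⟨?_, hsplit.conflictFree_Rreduct_inter hcf⟩⟩
  · exact hsplit.conflictFree_union h₁.1 h₁.2.1 h₁.2.2.1.isSupportClosed
      (subset_of_modification_admissible h₂) (conflictFree_Rreduct_of_modification h₂.2.1)
      h₂.2.2.1.isSupportClosed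
  · exact hcf.anti hsplit.R₁_subset Set.inter_subset_left

/-- Conflict-freeness lemma for attack splittings. -/
theorem BSAF.attackSplitting_conflictFree (F F₁ F₂ : BSAF α) (R₃ : Set (Set α × α))
    (hsplit : F.IsAttackSplitting F₁ F₂ R₃) (hfin : F.A.Finite)
    (s₀ : α) (hs₀ : s₀ ∉ F.A) :
    (∀ E₁ E₂ : Set α, F₁.Admissible E₁ →
      (F.modification F₁ F₂ R₃ E₁ s₀).Admissible E₂ →
      F.ConflictFree (E₁ ∪ E₂)) ∧
    (∀ E : Set α, E ⊆ F.A → F.ConflictFree E →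
      F₁.ConflictFree (E ∩ F₁.A) ∧
      (F.Rreduct F₁ F₂ R₃ (E ∩ F₁.A)).ConflictFree (E ∩ F₂.A)) :=
  BSAF.attackSplitting_conflictFree_general F F₁ F₂ R₃ hsplit s₀
end

section
/- Attack splitting theorem for complete semantics: with (F₁,F₂,R₃), R₃ᶜ, and F₂* as in the attack-splitting construction, (1) E₁ ∈ com(F₁) and E₂ ∈ com(F₂*) imply E₁ ∪ E₂ ∈ com(F); and (2) E ∈ com(F) implies E ∩ A₁ ∈ com(F₁) and E ∩ A₂ ∈ com(F₂*). -/
variable {α : Type*}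

namespace BSAF

section Aux

variable {F F₁ F₂ G G' : BSAF α} {R₃ : Set (Set α × α)} {s₀ : α} {E E' E₁ E₂ X Y D : Set α} {a : α}

lemma InCl.mono (hS : G.S ⊆ G'.S) (hE : E ⊆ E') (h : G.InCl E a) : G'.InCl E' a := by
  induction h with
  | base h => exact .base (hE h)
  | step hT _ ih => exact .step (hS hT) ih

lemma InCl.bind (h : G.InCl E a) (hE : ∀ b ∈ E, G.InCl E' b) : G.InCl E' a := by
  induction h with
  | base h => exact hE _ h
  | step hT _ ih => exact .step hT ih

lemma InCl.subset_of (h : G.InCl E a) (hE : E ⊆ X) (hhead : ∀ p ∈ G.S, p.2 ∈ X) : a ∈ X := by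
  induction h with
  | base h => exact hE h
  | step hT _ _ => exact hhead _ hT

lemma cl_idem (h : G.InCl (G.cl E) a) : G.InCl E a := h.bind (fun _ hb => hb)

lemma closed_of (h : ∀ b, G.InCl E b → b ∈ E) : G.Closed E :=
  Set.Subset.antisymm (fun _ hb => h _ hb) (fun _ hb => .base hb)

lemma Closed.mem (h : G.Closed E) (hb : G.InCl E a) : a ∈ E := h ▸ hb

end Aux

section Split

variable {F F₁ F₂ : BSAF α} {R₃ : Set (Set α × α)} {s₀ : α} {E E' E₁ E₂ X Y D : Set α} {a : α}
variable (hsplit : F.IsAttackSplitting F₁ F₂ R₃)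

lemma notMem_inter (hsplit : F.IsAttackSplitting F₁ F₂ R₃)
    (h1 : a ∈ F₁.A) (h2 : a ∈ F₂.A) : False :=
  Set.eq_empty_iff_forall_notMem.mp hsplit.2.2.1 a ⟨h1, h2⟩

lemma incl_split (hsplit : F.IsAttackSplitting F₁ F₂ R₃) (h : F.InCl E a) :
    a ∈ E ∨ (a ∈ F₁.A ∧ F₁.InCl (E ∩ F₁.A) a) ∨ (a ∈ F₂.A ∧ F₂.InCl (E ∩ F₂.A) a) := by
  induction h with
  | base h => exact Or.inl h
  | @step T h hT ht ih =>
    rw [hsplit.2.2.2.2.1] at hT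
    rcases hT with hT | hT
    · refine Or.inr (Or.inl ⟨(hsplit.1.2 _ hT).2, .step hT fun t htT => ?_⟩)
      have htA : t ∈ F₁.A := (hsplit.1.2 _ hT).1 htT
      rcases ih t htT with h' | ⟨_, h'⟩ | ⟨h2, _⟩
      · exact .base ⟨h', htA⟩
      · exact h'
      · exact absurd h2 (fun h2 => notMem_inter hsplit htA h2)
    · refine Or.inr (Or.inr ⟨(hsplit.2.1.2 _ hT).2, .step hT fun t htT => ?_⟩)
      have htA : t ∈ F₂.A := (hsplit.2.1.2 _ hT).1 htT
      rcases ih t htT with h' | ⟨h1, _⟩ | ⟨_, h'⟩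
      · exact .base ⟨h', htA⟩
      · exact absurd h1 (fun h1 => notMem_inter hsplit h1 htA)
      · exact h'

lemma incl_one (hsplit : F.IsAttackSplitting F₁ F₂ R₃) (h : F₁.InCl E a) : F.InCl E a :=
  h.mono (by rw [hsplit.2.2.2.2.1]; exact Set.subset_union_left) le_rfl

lemma incl_two (hsplit : F.IsAttackSplitting F₁ F₂ R₃) (h : F₂.InCl E a) : F.InCl E a :=
  h.mono (by rw [hsplit.2.2.2.2.1]; exact Set.subset_union_right) le_rfl

lemma cl_subset_A (hsplit : F.IsAttackSplitting F₁ F₂ R₃) (hE : E ⊆ F.A) (h : F.InCl E a) :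
    a ∈ F.A := by
  refine h.subset_of hE fun p hp => ?_
  rw [hsplit.2.2.2.2.1] at hp
  rw [hsplit.2.2.2.1]
  rcases hp with hp | hp
  · exact Or.inl (hsplit.1.2 _ hp).2
  · exact Or.inr (hsplit.2.1.2 _ hp).2

lemma incl_two_head (hsplit : F.IsAttackSplitting F₁ F₂ R₃) (h : F₂.InCl X a) :
    a ∈ X ∨ a ∈ F₂.A := by
  induction h with
  | base h => exact Or.inl h
  | step hT _ _ => exact Or.inr (hsplit.2.1.2 _ hT).2

lemma incl_one_head (hsplit : F.IsAttackSplitting F₁ F₂ R₃) (h : F₁.InCl X a) :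
    a ∈ X ∨ a ∈ F₁.A := by
  induction h with
  | base h => exact Or.inl h
  | step hT _ _ => exact Or.inr (hsplit.1.2 _ hT).2

end Split
end BSAF

namespace BSAF
section Mod
variable {F F₁ F₂ : BSAF α} {R₃ : Set (Set α × α)} {s₀ : α} {E E' E₁ E₂ X Y D V T : Set α} {a h : α}

lemma mod_R_cases {p : Set α × α} (hp : p ∈ (F.modification F₁ F₂ R₃ E₁ s₀).R) :
    p ∈ F₂.R ∨ p = ({s₀}, s₀) ∨
    (∃ T h, (T, h) ∈ R₃ ∧ F.cl T ∩ attackedBy (F₁.R ∪ F.closedLinks R₃) E₁ = ∅ ∧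
      F.cl T ∩ F₁.A ⊆ E₁ ∧ p = (F.cl T ∩ F₂.A, h)) ∨
    (∃ T h, (T, h) ∈ R₃ ∧ F.cl T ∩ attackedBy (F₁.R ∪ F.closedLinks R₃) E₁ = ∅ ∧
      ¬ F.cl T ∩ F₁.A ⊆ E₁ ∧ p = ((F.cl T ∩ F₂.A) ∪ {s₀}, h)) := by
  rcases hp with (hp | hp) | hp
  · rcases hp with hp | hp
    · exact Or.inl hp
    · obtain ⟨T', h', ⟨T, h, hTh, hEq⟩, hAtt, hSub, rfl⟩ := hp
      obtain ⟨rfl, rfl⟩ := Prod.mk.injEq .. ▸ hEq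
      exact Or.inr (Or.inr (Or.inl ⟨T, h', hTh, hAtt, hSub, rfl⟩))
  · exact Or.inr (Or.inl hp)
  · obtain ⟨T', h', ⟨⟨T, h, hTh, hEq⟩, hAtt, hSub⟩, rfl⟩ := hp
    obtain ⟨rfl, rfl⟩ := Prod.mk.injEq .. ▸ hEq
    exact Or.inr (Or.inr (Or.inr ⟨T, h', hTh, hAtt, hSub, rfl⟩))

lemma mem_mod_R_of_two (hp : (T, h) ∈ F₂.R) : (T, h) ∈ (F.modification F₁ F₂ R₃ E₁ s₀).R :=
  Or.inl (Or.inl (Or.inl hp))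

lemma mem_mod_R_self : (({s₀} : Set α), s₀) ∈ (F.modification F₁ F₂ R₃ E₁ s₀).R :=
  Or.inl (Or.inr rfl)

lemma mem_mod_R_reduct (hTh : (T, h) ∈ R₃)
    (hAtt : F.cl T ∩ attackedBy (F₁.R ∪ F.closedLinks R₃) E₁ = ∅)
    (hSub : F.cl T ∩ F₁.A ⊆ E₁) :
    (F.cl T ∩ F₂.A, h) ∈ (F.modification F₁ F₂ R₃ E₁ s₀).R :=
  Or.inl (Or.inl (Or.inr ⟨F.cl T, h, ⟨T, h, hTh, rfl⟩, hAtt, hSub, rfl⟩))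

lemma mem_mod_R_undec (hTh : (T, h) ∈ R₃)
    (hAtt : F.cl T ∩ attackedBy (F₁.R ∪ F.closedLinks R₃) E₁ = ∅)
    (hSub : ¬ F.cl T ∩ F₁.A ⊆ E₁) :
    ((F.cl T ∩ F₂.A) ∪ {s₀}, h) ∈ (F.modification F₁ F₂ R₃ E₁ s₀).R :=
  Or.inr ⟨F.cl T, h, ⟨⟨T, h, hTh, rfl⟩, hAtt, hSub⟩, rfl⟩

end Mod
end BSAF

namespace BSAF
section Transfer
variable {F F₁ F₂ : BSAF α} {R₃ : Set (Set α × α)} {s₀ : α} {E E' E₁ E₂ X Y D V T : Set α} {a h : α}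

lemma s0_not_two (hsplit : F.IsAttackSplitting F₁ F₂ R₃) (hs₀ : s₀ ∉ F.A) : s₀ ∉ F₂.A :=
  fun h => hs₀ (hsplit.2.2.2.1 ▸ Or.inr h)

lemma s0_not_one (hsplit : F.IsAttackSplitting F₁ F₂ R₃) (hs₀ : s₀ ∉ F.A) : s₀ ∉ F₁.A :=
  fun h => hs₀ (hsplit.2.2.2.1 ▸ Or.inl h)

lemma incl_mod_mp (h : (F.modification F₁ F₂ R₃ E₁ s₀).InCl X a) : F₂.InCl X a :=
  InCl.mono (G := F.modification F₁ F₂ R₃ E₁ s₀) (G' := F₂) (fun _ h => h) le_rfl h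

lemma incl_mod_mpr (h : F₂.InCl X a) : (F.modification F₁ F₂ R₃ E₁ s₀).InCl X a :=
  InCl.mono (G := F₂) (G' := F.modification F₁ F₂ R₃ E₁ s₀) (fun _ h => h) le_rfl h

/-- `F.cl T ⊆ E` when `T ⊆ E` and `E` is `F`-closed. -/
lemma cl_subset_of_closed_s11 (hCl : F.Closed E) (hTE : T ⊆ E) : F.cl T ⊆ E :=
  fun _ hx => hCl.mem (InCl.mono le_rfl hTE hx)

/-- Transfer an `F`-attack with head in `A₂` from within `E` into the modification. -/
lemma transfer_attack (hsplit : F.IsAttackSplitting F₁ F₂ R₃)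
    (hCF : F.ConflictFree E) (hCl : F.Closed E)
    (hh : h ∈ F₂.A) (hTh : (T, h) ∈ F.R) (hTE : T ⊆ E) :
    ∃ V, (V, h) ∈ (F.modification F₁ F₂ R₃ (E ∩ F₁.A) s₀).R ∧ V ⊆ E ∩ F₂.A := by
  rw [hsplit.2.2.2.2.2.1] at hTh
  rcases hTh with (hTh | hTh) | hTh
  · exact absurd (hsplit.1.1 _ hTh).2 fun h1 => notMem_inter hsplit h1 hh
  · exact ⟨T, mem_mod_R_of_two hTh, fun t ht => ⟨hTE ht, (hsplit.2.1.1 _ hTh).1 ht⟩⟩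
  · have hclE : F.cl T ⊆ E := cl_subset_of_closed_s11 hCl hTE
    have hAtt : F.cl T ∩ attackedBy (F₁.R ∪ F.closedLinks R₃) (E ∩ F₁.A) = ∅ := by
      rw [Set.eq_empty_iff_forall_notMem]
      rintro x ⟨hx, U, hU, hUE⟩
      rcases hU with hU | ⟨U', x', hU', hEq⟩
      · exact hCF ⟨U, x, hsplit.2.2.2.2.2.1 ▸ Or.inl (Or.inl hU),
          fun u hu => (hUE hu).1, hclE hx⟩
      · have h1 : U = F.cl U' := congrArg Prod.fst hEq
        have h2 : x' = x := (congrArg Prod.snd hEq).symm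
        exact hCF ⟨U', x, hsplit.2.2.2.2.2.1 ▸ Or.inr (h2 ▸ hU'),
          fun u hu => (hUE (h1.symm ▸ InCl.base hu)).1, hclE hx⟩
    exact ⟨F.cl T ∩ F₂.A,
      mem_mod_R_reduct hTh hAtt (fun x hx => ⟨hclE hx.1, hx.2⟩),
      fun x hx => ⟨hclE hx.1, hx.2⟩⟩

/-- Transfer an attack of the modification from within `E ∩ A₂` back to `F`. -/
lemma backtransfer_attack (hsplit : F.IsAttackSplitting F₁ F₂ R₃) (hs₀ : s₀ ∉ F.A)
    (hV : (V, h) ∈ (F.modification F₁ F₂ R₃ (E ∩ F₁.A) s₀).R) (hVE : V ⊆ E ∩ F₂.A) :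
    ∃ W, (W, h) ∈ F.R ∧ W ⊆ E := by
  rcases mod_R_cases hV with hp | hp | ⟨T, h', hTh, hAtt, hSub, hEq⟩ | ⟨T, h', hTh, hAtt, hSub, hEq⟩
  · exact ⟨V, hsplit.2.2.2.2.2.1 ▸ Or.inl (Or.inr hp), fun v hv => (hVE hv).1⟩
  · obtain ⟨rfl, rfl⟩ := Prod.mk.injEq .. ▸ hp
    exact absurd (hVE rfl).2 (s0_not_two hsplit hs₀)
  · obtain ⟨rfl, rfl⟩ := Prod.mk.injEq .. ▸ hEq
    have hclA : F.cl T ⊆ F.A := fun x hx =>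
      cl_subset_A hsplit (hsplit.2.2.2.2.2.2 _ hTh).2.1 hx
    have hclE : F.cl T ⊆ E := by
      intro x hx
      rcases hsplit.2.2.2.1 ▸ hclA hx with h1 | h2
      · exact (hSub ⟨hx, h1⟩).1
      · exact (hVE ⟨hx, h2⟩).1
    exact ⟨T, hsplit.2.2.2.2.2.1 ▸ Or.inr hTh, fun t ht => hclE (InCl.base ht)⟩
  · obtain ⟨rfl, rfl⟩ := Prod.mk.injEq .. ▸ hEq
    exact absurd (hVE (Or.inr rfl)).2 (s0_not_two hsplit hs₀)

/-- any modification attack with head `s₀` contains `s₀` in its tail. -/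
lemma s0_mem_tail (hsplit : F.IsAttackSplitting F₁ F₂ R₃) (hs₀ : s₀ ∉ F.A)
    (hV : (V, s₀) ∈ (F.modification F₁ F₂ R₃ E₁ s₀).R) : s₀ ∈ V := by
  rcases mod_R_cases hV with hp | hp | ⟨T, h', hTh, _, _, hEq⟩ | ⟨T, h', hTh, _, _, hEq⟩
  · exact absurd (hsplit.2.1.1 _ hp).2 (s0_not_two hsplit hs₀)
  · obtain ⟨rfl, _⟩ := Prod.mk.injEq .. ▸ hp
    exact rfl
  · obtain ⟨_, rfl⟩ := Prod.mk.injEq .. ▸ hEq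
    exact absurd (hsplit.2.2.2.2.2.2 _ hTh).2.2 (s0_not_two hsplit hs₀)
  · obtain ⟨_, rfl⟩ := Prod.mk.injEq .. ▸ hEq
    exact absurd (hsplit.2.2.2.2.2.2 _ hTh).2.2 (s0_not_two hsplit hs₀)

lemma incl_union_s0 (hsplit : F.IsAttackSplitting F₁ F₂ R₃) (hs₀ : s₀ ∉ F.A)
    (h : F₂.InCl (X ∪ {s₀}) a) : a = s₀ ∨ F₂.InCl X a := by
  induction h with
  | base h => exact h.elim (fun h => Or.inr (.base h)) Or.inl
  | @step T h hT ht ih =>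
    refine Or.inr (.step hT fun t htT => ?_)
    rcases ih t htT with rfl | h'
    · exact absurd ((hsplit.2.1.2 _ hT).1 htT) (s0_not_two hsplit hs₀)
    · exact h'

/-- `X ∩ A₁` is `F₁`-closed when `X` is `F`-closed. -/
lemma closed_inter_one (hsplit : F.IsAttackSplitting F₁ F₂ R₃) (hX : F.Closed X) :
    F₁.Closed (X ∩ F₁.A) := by
  refine closed_of fun b hb => ?_
  have hbX : b ∈ X := hX.mem (incl_one hsplit (hb.mono le_rfl Set.inter_subset_left))
  rcases incl_one_head hsplit hb with h | h
  · exact h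
  · exact ⟨hbX, h⟩

lemma closed_inter_two (hsplit : F.IsAttackSplitting F₁ F₂ R₃) (hX : F.Closed X) :
    F₂.Closed (X ∩ F₂.A) := by
  refine closed_of fun b hb => ?_
  have hbX : b ∈ X := hX.mem (incl_two hsplit (hb.mono le_rfl Set.inter_subset_left))
  rcases incl_two_head hsplit hb with h | h
  · exact h
  · exact ⟨hbX, h⟩

lemma mod_closed_iff : (F.modification F₁ F₂ R₃ E₁ s₀).Closed X ↔ F₂.Closed X := by
  constructor <;> intro h
  · exact closed_of fun b hb => h.mem (incl_mod_mpr hb)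
  · exact closed_of fun b hb => h.mem (incl_mod_mp hb)

end Transfer
end BSAF

namespace BSAF
section Defends
variable {F F₁ F₂ : BSAF α} {R₃ : Set (Set α × α)} {s₀ : α} {E E₁ E₂ X Y D V T : Set α} {a h : α}

lemma one_subset_A (hsplit : F.IsAttackSplitting F₁ F₂ R₃) : F₁.A ⊆ F.A :=
  fun _ hx => hsplit.2.2.2.1 ▸ Or.inl hx

lemma two_subset_A (hsplit : F.IsAttackSplitting F₁ F₂ R₃) : F₂.A ⊆ F.A :=
  fun _ hx => hsplit.2.2.2.1 ▸ Or.inr hx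

/-- D1: `E` defends `a ∈ A₁` in `F` implies `E ∩ A₁` defends `a` in `F₁`. -/
lemma defends_one_of (hsplit : F.IsAttackSplitting F₁ F₂ R₃)
    (hCF : F.ConflictFree E) (hCl : F.Closed E)
    (hd : F.Defends E a) : F₁.Defends (E ∩ F₁.A) a := by
  intro D₁ hD₁A hD₁cl hex
  obtain ⟨U, hUa, hUD⟩ := hex
  have hDA : F.cl D₁ ⊆ F.A := fun x hx =>
    cl_subset_A hsplit (hD₁A.trans (one_subset_A hsplit)) hx
  have hDcl : F.Closed (F.cl D₁) := closed_of fun b hb => cl_idem hb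
  obtain ⟨V, h, hVh, hVE, hhD⟩ := hd (F.cl D₁) hDA hDcl
    ⟨U, hsplit.2.2.2.2.2.1 ▸ Or.inl (Or.inl hUa), fun u hu => InCl.base (hUD hu)⟩
  rcases incl_split hsplit hhD with hh | ⟨hh1, hh2⟩ | ⟨hh1, hh2⟩
  · -- h ∈ D₁
    rw [hsplit.2.2.2.2.2.1] at hVh
    rcases hVh with (hVh | hVh) | hVh
    · exact ⟨V, h, hVh, fun v hv => ⟨hVE hv, (hsplit.1.1 _ hVh).1 hv⟩, hh⟩
    · exact absurd (hsplit.2.1.1 _ hVh).2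
        (fun h2 => notMem_inter hsplit (hD₁A hh) h2)
    · exact absurd (hsplit.2.2.2.2.2.2 _ hVh).2.2
        (fun h2 => notMem_inter hsplit (hD₁A hh) h2)
  · -- h ∈ A₁ with F₁.InCl (D₁ ∩ A₁) h, hence h ∈ D₁
    have hh : h ∈ D₁ := hD₁cl.mem (hh2.mono le_rfl Set.inter_subset_left)
    rw [hsplit.2.2.2.2.2.1] at hVh
    rcases hVh with (hVh | hVh) | hVh
    · exact ⟨V, h, hVh, fun v hv => ⟨hVE hv, (hsplit.1.1 _ hVh).1 hv⟩, hh⟩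
    · exact absurd (hsplit.2.1.1 _ hVh).2 (fun h2 => notMem_inter hsplit hh1 h2)
    · exact absurd (hsplit.2.2.2.2.2.2 _ hVh).2.2 (fun h2 => notMem_inter hsplit hh1 h2)
  · -- h ∈ A₂: then h lands in the F₂-spill of cl D₁, which lies inside E
    have hsub : D₁ ∩ F₂.A ⊆ E := fun x hx =>
      absurd hx.2 (fun h2 => notMem_inter hsplit (hD₁A hx.1) h2)
    have hhE : h ∈ E := hCl.mem (incl_two hsplit (hh2.mono le_rfl hsub))
    exact absurd ⟨V, h, hVh, hVE, hhE⟩ hCF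

/-- D2: `E ∩ A₁` defends `a ∈ A₁` in `F₁` implies `E` defends `a` in `F`. -/
lemma defends_of_one (hsplit : F.IsAttackSplitting F₁ F₂ R₃) (ha : a ∈ F₁.A)
    (hd : F₁.Defends (E ∩ F₁.A) a) : F.Defends E a := by
  intro D hDA hDcl hex
  obtain ⟨U, hUa, hUD⟩ := hex
  rw [hsplit.2.2.2.2.2.1] at hUa
  rcases hUa with (hUa | hUa) | hUa
  · obtain ⟨V, h, hVh, hVE, hhD⟩ := hd (D ∩ F₁.A) Set.inter_subset_right
      (closed_inter_one hsplit hDcl)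
      ⟨U, hUa, fun u hu => ⟨hUD hu, (hsplit.1.1 _ hUa).1 hu⟩⟩
    exact ⟨V, h, hsplit.2.2.2.2.2.1 ▸ Or.inl (Or.inl hVh),
      hVE.trans Set.inter_subset_left, hhD.1⟩
  · exact absurd (hsplit.2.1.1 _ hUa).2 (fun h2 => notMem_inter hsplit ha h2)
  · exact absurd (hsplit.2.2.2.2.2.2 _ hUa).2.2 (fun h2 => notMem_inter hsplit ha h2)

/-- Core helper: produce a modification-attack on `D'` from an `F`-defense of `a`. -/
lemma attack_into (hsplit : F.IsAttackSplitting F₁ F₂ R₃)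
    (hCF : F.ConflictFree E) (hCl : F.Closed E)
    {X D' : Set α} (hXA : X ⊆ F.A) (hd : F.Defends E a)
    (hatk : ∃ U, (U, a) ∈ F.R ∧ U ⊆ X)
    (hA1 : ∀ V h, (V, h) ∈ F.R → V ⊆ E → F.InCl X h → h ∈ F₁.A → False)
    (hA2 : ∀ h, F.InCl X h → h ∈ F₂.A → h ∈ D') :
    (F.modification F₁ F₂ R₃ (E ∩ F₁.A) s₀).Attacks (E ∩ F₂.A) D' := by
  obtain ⟨U, hUa, hUX⟩ := hatk
  have hDA : F.cl X ⊆ F.A := fun x hx => cl_subset_A hsplit hXA hx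
  have hDcl : F.Closed (F.cl X) := closed_of fun b hb => cl_idem hb
  obtain ⟨V, h, hVh, hVE, hhD⟩ := hd (F.cl X) hDA hDcl
    ⟨U, hUa, fun u hu => InCl.base (hUX hu)⟩
  rcases hsplit.2.2.2.1 ▸ hDA hhD with hh | hh
  · exact absurd (hA1 V h hVh hVE hhD hh) not_false
  · obtain ⟨W, hW, hWE⟩ := transfer_attack (s₀ := s₀) hsplit hCF hCl hh hVh hVE
    exact ⟨W, h, hW, hWE, hA2 h hhD hh⟩

end Defends
end BSAF

namespace BSAF
section DefendsTwo
variable {F F₁ F₂ : BSAF α} {R₃ : Set (Set α × α)} {s₀ : α} {E E₁ E₂ X Y D V T : Set α} {a h : α}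

/-- D3: `E` defends `a ∈ A₂` in `F` implies `E ∩ A₂` defends `a` in the modification. -/
lemma defends_two_of (hsplit : F.IsAttackSplitting F₁ F₂ R₃) (hs₀ : s₀ ∉ F.A)
    (hCF : F.ConflictFree E) (hCl : F.Closed E) (ha : a ∈ F₂.A)
    (hd : F.Defends E a) :
    (F.modification F₁ F₂ R₃ (E ∩ F₁.A) s₀).Defends (E ∩ F₂.A) a := by
  intro D' hD'A hD'cl hex
  obtain ⟨V, hVa, hVD⟩ := hex
  have hD'cl₂ : F₂.Closed D' := mod_closed_iff.1 hD'cl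
  rcases mod_R_cases hVa with hp | hp | ⟨T, h', hTh, hAtt, hSub, hEq⟩ |
      ⟨T, h', hTh, hAtt, hSub, hEq⟩
  · -- attack on `a` via `R₂`
    refine attack_into hsplit hCF hCl (X := D' ∩ F₂.A)
      (Set.inter_subset_right.trans (two_subset_A hsplit)) hd
      ⟨V, hsplit.2.2.2.2.2.1 ▸ Or.inl (Or.inr hp),
        fun v hv => ⟨hVD hv, (hsplit.2.1.1 _ hp).1 hv⟩⟩ ?_ ?_
    · intro W h hWh hWE hh hh1
      rcases incl_split hsplit hh with hh' | ⟨_, hh'⟩ | ⟨hh2, _⟩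
      · exact notMem_inter hsplit hh1 hh'.2
      · have : h ∈ E := hCl.mem (incl_one hsplit (hh'.mono le_rfl
          (fun x hx => absurd hx.2 fun h2 => notMem_inter hsplit h2 hx.1.2)))
        exact hCF ⟨W, h, hWh, hWE, this⟩
      · exact notMem_inter hsplit hh1 hh2
    · intro h hh hh2
      rcases incl_split hsplit hh with hh' | ⟨hh1, _⟩ | ⟨_, hh'⟩
      · exact hh'.1
      · exact absurd hh2 fun h2 => notMem_inter hsplit hh1 h2
      · exact hD'cl₂.mem (hh'.mono le_rfl (fun x hx => hx.1.1))
  · -- the self-attack: impossible since `a ∈ A₂`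
    have : a = s₀ := congrArg Prod.snd hp
    exact absurd (this ▸ ha) (s0_not_two hsplit hs₀)
  · -- reduct link
    have h1 : V = F.cl T ∩ F₂.A := congrArg Prod.fst hEq
    have h2 : h' = a := (congrArg Prod.snd hEq).symm
    have hclA : F.cl T ⊆ F.A := fun x hx =>
      cl_subset_A hsplit (hsplit.2.2.2.2.2.2 _ hTh).2.1 hx
    have hclD' : F.cl T ∩ F₂.A ⊆ D' := h1 ▸ hVD
    refine attack_into hsplit hCF hCl (X := F.cl T ∪ (D' ∩ F₂.A))
      (Set.union_subset hclA (Set.inter_subset_right.trans (two_subset_A hsplit))) hd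
      ⟨T, hsplit.2.2.2.2.2.1 ▸ Or.inr (h2 ▸ hTh),
        fun t ht => Or.inl (InCl.base ht)⟩ ?_ ?_
    · intro W h hWh hWE hh hh1
      have hXsub : (F.cl T ∪ (D' ∩ F₂.A)) ∩ F₁.A ⊆ E := by
        rintro x ⟨hx | hx, hx1⟩
        · exact (hSub ⟨hx, hx1⟩).1
        · exact absurd hx1 fun h2 => notMem_inter hsplit h2 hx.2
      rcases incl_split hsplit hh with hh' | ⟨_, hh'⟩ | ⟨hh2, _⟩
      · exact hCF ⟨W, h, hWh, hWE, hXsub ⟨hh', hh1⟩⟩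
      · have : h ∈ E := hCl.mem (incl_one hsplit (hh'.mono le_rfl hXsub))
        exact hCF ⟨W, h, hWh, hWE, this⟩
      · exact notMem_inter hsplit hh1 hh2
    · intro h hh hh2
      have hXsub : (F.cl T ∪ (D' ∩ F₂.A)) ∩ F₂.A ⊆ D' := by
        rintro x ⟨hx | hx, hx2⟩
        · exact hclD' ⟨hx, hx2⟩
        · exact hx.1
      rcases incl_split hsplit hh with hh' | ⟨hh1, _⟩ | ⟨_, hh'⟩
      · exact hXsub ⟨hh', hh2⟩
      · exact absurd hh2 fun h2 => notMem_inter hsplit hh1 h2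
      · exact hD'cl₂.mem (hh'.mono le_rfl hXsub)
  · -- undecided link
    have h1 : V = (F.cl T ∩ F₂.A) ∪ {s₀} := congrArg Prod.fst hEq
    have h2 : h' = a := (congrArg Prod.snd hEq).symm
    have hclA : F.cl T ⊆ F.A := fun x hx =>
      cl_subset_A hsplit (hsplit.2.2.2.2.2.2 _ hTh).2.1 hx
    have hclD' : F.cl T ∩ F₂.A ⊆ D' := fun x hx => hVD (h1 ▸ Or.inl hx)
    refine attack_into hsplit hCF hCl (X := F.cl T ∪ (D' ∩ F₂.A))
      (Set.union_subset hclA (Set.inter_subset_right.trans (two_subset_A hsplit))) hd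
      ⟨T, hsplit.2.2.2.2.2.1 ▸ Or.inr (h2 ▸ hTh),
        fun t ht => Or.inl (InCl.base ht)⟩ ?_ ?_
    · intro W h hWh hWE hh hh1
      -- here `h` lands in `cl T ∩ A₁`, contradicting `hAtt`
      have hXsub : (F.cl T ∪ (D' ∩ F₂.A)) ∩ F₁.A ⊆ F.cl T := by
        rintro x ⟨hx | hx, hx1⟩
        · exact hx
        · exact absurd hx1 fun h2 => notMem_inter hsplit h2 hx.2
      have hhcl : h ∈ F.cl T := by
        rcases incl_split hsplit hh with hh' | ⟨_, hh'⟩ | ⟨hh2, _⟩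
        · exact hXsub ⟨hh', hh1⟩
        · exact cl_idem (incl_one hsplit (hh'.mono le_rfl hXsub))
        · exact absurd hh2 fun h2 => notMem_inter hsplit hh1 h2
      -- the attack (W, h) must be an R₁-attack
      rw [hsplit.2.2.2.2.2.1] at hWh
      rcases hWh with (hWh | hWh) | hWh
      · exact Set.eq_empty_iff_forall_notMem.mp hAtt h
          ⟨hhcl, W, Or.inl hWh, fun w hw => ⟨hWE hw, (hsplit.1.1 _ hWh).1 hw⟩⟩
      · exact notMem_inter hsplit hh1 (hsplit.2.1.1 _ hWh).2
      · exact notMem_inter hsplit hh1 (hsplit.2.2.2.2.2.2 _ hWh).2.2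
    · intro h hh hh2
      have hXsub : (F.cl T ∪ (D' ∩ F₂.A)) ∩ F₂.A ⊆ D' := by
        rintro x ⟨hx | hx, hx2⟩
        · exact hclD' ⟨hx, hx2⟩
        · exact hx.1
      rcases incl_split hsplit hh with hh' | ⟨hh1, _⟩ | ⟨_, hh'⟩
      · exact hXsub ⟨hh', hh2⟩
      · exact absurd hh2 fun hx => notMem_inter hsplit hh1 hx
      · exact hD'cl₂.mem (hh'.mono le_rfl hXsub)

/-- D4: `E ∩ A₂` defends `a ∈ A₂` in the modification implies `E` defends `a` in `F`. -/
lemma defends_of_two (hsplit : F.IsAttackSplitting F₁ F₂ R₃) (hs₀ : s₀ ∉ F.A)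
    (ha : a ∈ F₂.A)
    (hd : (F.modification F₁ F₂ R₃ (E ∩ F₁.A) s₀).Defends (E ∩ F₂.A) a) :
    F.Defends E a := by
  intro D hDA hDcl hex
  obtain ⟨U, hUa, hUD⟩ := hex
  rw [hsplit.2.2.2.2.2.1] at hUa
  rcases hUa with (hUa | hUa) | hUa
  · exact absurd (hsplit.1.1 _ hUa).2 fun h1 => notMem_inter hsplit h1 ha
  · -- R₂-attack on a
    obtain ⟨V, h, hVh, hVE, hhD⟩ := hd (D ∩ F₂.A)
      (Set.inter_subset_right.trans Set.subset_union_left)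
      (mod_closed_iff.2 (closed_inter_two hsplit hDcl))
      ⟨U, mem_mod_R_of_two hUa, fun u hu => ⟨hUD hu, (hsplit.2.1.1 _ hUa).1 hu⟩⟩
    obtain ⟨W, hW, hWE⟩ := backtransfer_attack hsplit hs₀ hVh hVE
    exact ⟨W, h, hW, hWE, hhD.1⟩
  · -- R₃-attack on a
    have hclD : F.cl U ⊆ D := cl_subset_of_closed_s11 hDcl hUD
    by_cases hatt : F.cl U ∩ attackedBy (F₁.R ∪ F.closedLinks R₃) (E ∩ F₁.A) = ∅
    · by_cases hsub : F.cl U ∩ F₁.A ⊆ E ∩ F₁.A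
      · -- reduct link applies
        obtain ⟨V, h, hVh, hVE, hhD⟩ := hd (D ∩ F₂.A)
          (Set.inter_subset_right.trans Set.subset_union_left)
          (mod_closed_iff.2 (closed_inter_two hsplit hDcl))
          ⟨F.cl U ∩ F₂.A, mem_mod_R_reduct hUa hatt hsub,
            fun x hx => ⟨hclD hx.1, hx.2⟩⟩
        obtain ⟨W, hW, hWE⟩ := backtransfer_attack hsplit hs₀ hVh hVE
        exact ⟨W, h, hW, hWE, hhD.1⟩
      · -- undecided link applies
        have hD'cl : F₂.Closed ((D ∩ F₂.A) ∪ {s₀}) := by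
          refine closed_of fun b hb => ?_
          rcases incl_union_s0 hsplit hs₀ hb with rfl | hb'
          · exact Or.inr rfl
          · exact Or.inl ((closed_inter_two hsplit hDcl).mem hb')
        obtain ⟨V, h, hVh, hVE, hhD⟩ := hd ((D ∩ F₂.A) ∪ {s₀})
          (Set.union_subset (Set.inter_subset_right.trans Set.subset_union_left)
            (Set.singleton_subset_iff.2 (Or.inr rfl)))
          (mod_closed_iff.2 hD'cl)
          ⟨(F.cl U ∩ F₂.A) ∪ {s₀}, mem_mod_R_undec hUa hatt hsub, by
            rintro x (hx | hx)
            · exact Or.inl ⟨hclD hx.1, hx.2⟩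
            · exact Or.inr hx⟩
        rcases hhD with hhD | hhD
        · obtain ⟨W, hW, hWE⟩ := backtransfer_attack hsplit hs₀ hVh hVE
          exact ⟨W, h, hW, hWE, hhD.1⟩
        · -- h = s₀: impossible, only the self-attack has head s₀
          rcases hx : hhD with rfl
          exact absurd (hVE (s0_mem_tail hsplit hs₀ hVh)).2 (s0_not_two hsplit hs₀)
    · -- cl U is attacked by E ∩ A₁: direct attack on D
      obtain ⟨x, hxcl, W, hW, hWE⟩ := Set.nonempty_iff_ne_empty.2 hatt
      rcases hW with hW | ⟨U', x', hU', hEq⟩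
      · exact ⟨W, x, hsplit.2.2.2.2.2.1 ▸ Or.inl (Or.inl hW),
          fun w hw => (hWE hw).1, hclD hxcl⟩
      · have h1 : W = F.cl U' := congrArg Prod.fst hEq
        have h2 : x' = x := (congrArg Prod.snd hEq).symm
        exact ⟨U', x, hsplit.2.2.2.2.2.1 ▸ Or.inr (h2 ▸ hU'),
          fun u hu => (hWE (h1.symm ▸ InCl.base hu)).1, hclD hxcl⟩

end DefendsTwo
end BSAF

namespace BSAF
section Main
variable {F F₁ F₂ : BSAF α} {R₃ : Set (Set α × α)} {s₀ : α} {E E₁ E₂ : Set α} {a : α}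

/-- Direction (2): a complete extension of `F` splits. -/
lemma complete_split (hsplit : F.IsAttackSplitting F₁ F₂ R₃) (hs₀ : s₀ ∉ F.A)
    (hE : F.Complete E) :
    F₁.Complete (E ∩ F₁.A) ∧
    (F.modification F₁ F₂ R₃ (E ∩ F₁.A) s₀).Complete (E ∩ F₂.A) := by
  obtain ⟨⟨hEA, hECF, hECl, hEDef⟩, hEcomp⟩ := hE
  refine ⟨⟨⟨Set.inter_subset_right, ?_, closed_inter_one hsplit hECl,
      fun a ha => defends_one_of hsplit hECF hECl (hEDef a ha.1)⟩, ?_⟩,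
    ⟨⟨Set.inter_subset_right.trans Set.subset_union_left, ?_,
      mod_closed_iff.2 (closed_inter_two hsplit hECl),
      fun a ha => defends_two_of hsplit hs₀ hECF hECl ha.2 (hEDef a ha.1)⟩, ?_⟩⟩
  · -- conflict-freeness of E ∩ A₁
    rintro ⟨T, h, hTh, hTE, hhE⟩
    exact hECF ⟨T, h, hsplit.2.2.2.2.2.1 ▸ Or.inl (Or.inl hTh),
      hTE.trans Set.inter_subset_left, hhE.1⟩
  · -- completeness of E ∩ A₁
    intro a ha hd
    exact ⟨hEcomp a (one_subset_A hsplit ha) (defends_of_one hsplit ha hd), ha⟩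
  · -- conflict-freeness of E ∩ A₂ in the modification
    rintro ⟨V, h, hVh, hVE, hhE⟩
    obtain ⟨W, hW, hWE⟩ := backtransfer_attack hsplit hs₀ hVh hVE
    exact hECF ⟨W, h, hW, hWE, hhE.1⟩
  · -- completeness of E ∩ A₂ in the modification
    rintro a (ha | ha) hd
    · exact ⟨hEcomp a (two_subset_A hsplit ha) (defends_of_two hsplit hs₀ ha hd), ha⟩
    · -- a = s₀: the defense hypothesis is contradictory
      exfalso
      have ha' : a = s₀ := ha
      rw [ha'] at hd
      have hZA : F₂.cl ∅ ∪ {s₀} ⊆ F₂.A ∪ {s₀} := by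
        rintro x (hx | hx)
        · rcases incl_two_head hsplit hx with h' | h'
          · exact absurd h' (Set.notMem_empty x)
          · exact Or.inl h'
        · exact Or.inr hx
      have hZcl : (F.modification F₁ F₂ R₃ (E ∩ F₁.A) s₀).Closed (F₂.cl ∅ ∪ {s₀}) := by
        refine mod_closed_iff.2 (closed_of fun b hb => ?_)
        rcases incl_union_s0 hsplit hs₀ hb with rfl | hb'
        · exact Or.inr rfl
        · exact Or.inl (cl_idem hb')
      obtain ⟨V, h, hVh, hVE, hhD⟩ := hd (F₂.cl ∅ ∪ {s₀}) hZA hZcl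
        ⟨{s₀}, mem_mod_R_self, Set.singleton_subset_iff.2 (Or.inr rfl)⟩
      rcases hhD with hhD | hhD
      · have hhE : h ∈ E ∩ F₂.A :=
          (closed_inter_two hsplit hECl).mem (hhD.mono le_rfl (Set.empty_subset _))
        obtain ⟨W, hW, hWE⟩ := backtransfer_attack hsplit hs₀ hVh hVE
        exact hECF ⟨W, h, hW, hWE, hhE.1⟩
      · rcases hhD with rfl
        exact s0_not_two hsplit hs₀ (hVE (s0_mem_tail hsplit hs₀ hVh)).2

/-- Direction (1): complete extensions combine. -/
lemma complete_union (hsplit : F.IsAttackSplitting F₁ F₂ R₃) (hs₀ : s₀ ∉ F.A)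
    (hc₁ : F₁.Complete E₁) (hc₂ : (F.modification F₁ F₂ R₃ E₁ s₀).Complete E₂) :
    F.Complete (E₁ ∪ E₂) := by
  obtain ⟨⟨hE₁A, hCF₁, hCl₁, hDef₁⟩, hcomp₁⟩ := hc₁
  obtain ⟨⟨hE₂A', hCF₂, hCl₂, hDef₂⟩, hcomp₂⟩ := hc₂
  have hs₀E₂ : s₀ ∉ E₂ := fun h =>
    hCF₂ ⟨{s₀}, s₀, mem_mod_R_self, Set.singleton_subset_iff.2 h, h⟩
  have hE₂A : E₂ ⊆ F₂.A := by
    intro x hx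
    rcases hE₂A' hx with h' | h'
    · exact h'
    · exact absurd (h' ▸ hx) hs₀E₂
  have hEq₁ : (E₁ ∪ E₂) ∩ F₁.A = E₁ := by
    refine Set.Subset.antisymm ?_ fun x hx => ⟨Or.inl hx, hE₁A hx⟩
    rintro x ⟨hx | hx, hx1⟩
    · exact hx
    · exact absurd hx1 fun h1 => notMem_inter hsplit h1 (hE₂A hx)
  have hEq₂ : (E₁ ∪ E₂) ∩ F₂.A = E₂ := by
    refine Set.Subset.antisymm ?_ fun x hx => ⟨Or.inr hx, hE₂A hx⟩
    rintro x ⟨hx | hx, hx2⟩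
    · exact absurd hx2 fun h2 => notMem_inter hsplit (hE₁A hx) h2
    · exact hx
  have hEA : E₁ ∪ E₂ ⊆ F.A :=
    Set.union_subset (hE₁A.trans (one_subset_A hsplit))
      (hE₂A.trans (two_subset_A hsplit))
  have hECl : F.Closed (E₁ ∪ E₂) := by
    refine closed_of fun b hb => ?_
    rcases incl_split hsplit hb with hb' | ⟨_, hb'⟩ | ⟨_, hb'⟩
    · exact hb'
    · exact Or.inl (hCl₁.mem (hEq₁ ▸ hb'))
    · exact Or.inr ((mod_closed_iff.1 hCl₂).mem (hEq₂ ▸ hb'))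
  have hECF : F.ConflictFree (E₁ ∪ E₂) := by
    rintro ⟨T, h, hTh, hTE, hhE⟩
    rw [hsplit.2.2.2.2.2.1] at hTh
    rcases hTh with (hTh | hTh) | hTh
    · exact hCF₁ ⟨T, h, hTh,
        fun t ht => (hEq₁ ▸ ⟨hTE ht, (hsplit.1.1 _ hTh).1 ht⟩ : t ∈ E₁),
        hEq₁ ▸ ⟨hhE, (hsplit.1.1 _ hTh).2⟩⟩
    · exact hCF₂ ⟨T, h, mem_mod_R_of_two hTh,
        fun t ht => (hEq₂ ▸ ⟨hTE ht, (hsplit.2.1.1 _ hTh).1 ht⟩ : t ∈ E₂),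
        hEq₂ ▸ ⟨hhE, (hsplit.2.1.1 _ hTh).2⟩⟩
    · have hclE : F.cl T ⊆ E₁ ∪ E₂ := cl_subset_of_closed_s11 hECl hTE
      have hhE₂ : h ∈ E₂ := hEq₂ ▸ ⟨hhE, (hsplit.2.2.2.2.2.2 _ hTh).2.2⟩
      by_cases hatt : F.cl T ∩ attackedBy (F₁.R ∪ F.closedLinks R₃) E₁ = ∅
      · exact hCF₂ ⟨F.cl T ∩ F₂.A, h,
          mem_mod_R_reduct hTh hatt (fun x hx => hEq₁ ▸ ⟨hclE hx.1, hx.2⟩),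
          fun x hx => (hEq₂ ▸ ⟨hclE hx.1, hx.2⟩ : x ∈ E₂), hhE₂⟩
      · obtain ⟨x, hxcl, W, hW, hWE⟩ := Set.nonempty_iff_ne_empty.2 hatt
        rcases hW with hW | ⟨U', x', hU', hEq⟩
        · exact hCF₁ ⟨W, x, hW, hWE,
            hEq₁ ▸ ⟨hclE hxcl, (hsplit.1.1 _ hW).2⟩⟩
        · have h1 : W = F.cl U' := congrArg Prod.fst hEq
          have h2 : x' = x := (congrArg Prod.snd hEq).symm
          have hxE₂ : x ∈ E₂ :=
            hEq₂ ▸ ⟨hclE hxcl, h2 ▸ (hsplit.2.2.2.2.2.2 _ hU').2.2⟩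
          have hatt' : F.cl U' ∩ attackedBy (F₁.R ∪ F.closedLinks R₃) E₁ = ∅ := by
            rw [Set.eq_empty_iff_forall_notMem]
            rintro y ⟨hycl, V2, hV2, hV2E⟩
            have hyE₁ : y ∈ E₁ := hWE (h1 ▸ hycl)
            rcases hV2 with hV2 | ⟨U'', y'', hU'', hEq''⟩
            · exact hCF₁ ⟨V2, y, hV2, hV2E, hyE₁⟩
            · have h2'' : y'' = y := (congrArg Prod.snd hEq'').symm
              exact notMem_inter hsplit (hE₁A hyE₁)
                (h2'' ▸ (hsplit.2.2.2.2.2.2 _ hU'').2.2)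
          exact hCF₂ ⟨F.cl U' ∩ F₂.A, x,
            mem_mod_R_reduct (h2 ▸ hU') hatt' (fun z hz => hWE (h1 ▸ hz.1)),
            fun z hz => absurd hz.2
              (fun hz2 => notMem_inter hsplit (hE₁A (hWE (h1 ▸ hz.1))) hz2),
            hxE₂⟩
  refine ⟨⟨hEA, hECF, hECl, ?_⟩, ?_⟩
  · rintro a (ha | ha)
    · exact defends_of_one hsplit (hE₁A ha) (hEq₁.symm ▸ hDef₁ a ha)
    · exact defends_of_two hsplit hs₀ (hE₂A ha)
        (by rw [hEq₁, hEq₂]; exact hDef₂ a ha)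
  · intro a ha hd
    rcases hsplit.2.2.2.1 ▸ ha with ha' | ha'
    · exact Or.inl (hcomp₁ a ha' (hEq₁ ▸ defends_one_of hsplit hECF hECl hd))
    · refine Or.inr (hcomp₂ a (Or.inl ha') ?_)
      have := defends_two_of (s₀ := s₀) hsplit hs₀ hECF hECl ha' hd
      rwa [hEq₁, hEq₂] at this

end Main
end BSAF

/-- Attack splitting theorem for complete semantics. -/
theorem BSAF.attackSplitting_complete (F F₁ F₂ : BSAF α) (R₃ : Set (Set α × α))
    (hsplit : F.IsAttackSplitting F₁ F₂ R₃) (hfin : F.A.Finite)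
    (s₀ : α) (hs₀ : s₀ ∉ F.A) :
    (∀ E₁ E₂ : Set α, F₁.Complete E₁ →
      (F.modification F₁ F₂ R₃ E₁ s₀).Complete E₂ → F.Complete (E₁ ∪ E₂)) ∧
    (∀ E : Set α, F.Complete E →
      F₁.Complete (E ∩ F₁.A) ∧
      (F.modification F₁ F₂ R₃ (E ∩ F₁.A) s₀).Complete (E ∩ F₂.A)) :=
  ⟨fun _ _ hc₁ hc₂ => BSAF.complete_union hsplit hs₀ hc₁ hc₂,
   fun _ hE => BSAF.complete_split hsplit hs₀ hE⟩
end
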